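/- Let n ≥ 2 and let Ω' ⊆ Ω be bounded domains in ℂⁿ such that Ω ∖ Ω' is a compact subset of Ω. Then s_p(Ω', Ω) = 1 for every 0 < p < ∞. -/

import Mathlib

open MeasureTheory Metric Complex Filter

noncomputable section

/-- Lebesgue measure on `ℂⁿ` (with the Euclidean metric). -/
noncomputable instance {n : ℕ} : MeasureSpace (EuclideanSpace ℂ (Fin n)) where
  volume := Measure.map (MeasurableEquiv.toLp 2 (Fin n → ℂ)) (volume : Measure (Fin n → ℂ))

/-- Membership in the `p`-Bergman space `A^p(Ω)`: `f` is holomorphic on `Ω` with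
`∫_Ω |f|^p dλ < ∞`. -/
def MemAp {n : ℕ} (Ω : Set (EuclideanSpace ℂ (Fin n))) (p : ℝ)
    (f : EuclideanSpace ℂ (Fin n) → ℂ) : Prop :=
  DifferentiableOn ℂ f Ω ∧
    (∫⁻ ζ in Ω, ENNReal.ofReal (‖f ζ‖ ^ p)) < ⊤

/-- The `p`-Bergman kernel
`K_p(z) = sup { |f(z)|^p / ∫_Ω |f|^p : f ∈ A^p(Ω), f ≢ 0 }`. -/
def bergmanK {n : ℕ} (Ω : Set (EuclideanSpace ℂ (Fin n))) (p : ℝ)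
    (z : EuclideanSpace ℂ (Fin n)) : ℝ :=
  sSup { t : ℝ | ∃ f, MemAp Ω p f ∧ (∃ ζ ∈ Ω, f ζ ≠ 0) ∧
    t = ‖f z‖ ^ p / ∫ ζ in Ω, ‖f ζ‖ ^ p }

/-- `m` is a minimizer of `∫_Ω |f|^p` among `f ∈ A^p(Ω)` with `f z = 1`;
for `1 ≤ p < ∞` the minimizer is unique and denoted `m_p(·,z)`. -/
def IsMinimizer {n : ℕ} (Ω : Set (EuclideanSpace ℂ (Fin n))) (p : ℝ)
    (z : EuclideanSpace ℂ (Fin n)) (m : EuclideanSpace ℂ (Fin n) → ℂ) : Prop :=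
  MemAp Ω p m ∧ m z = 1 ∧
    ∀ f, MemAp Ω p f → f z = 1 →
      (∫ ζ in Ω, ‖m ζ‖ ^ p) ≤ ∫ ζ in Ω, ‖f ζ‖ ^ p

/-- The `p`-Schwarz content `s_p(E,Ω) = sup { ∫_E |f|^p / ∫_Ω |f|^p : f ∈ A^p(Ω), f ≢ 0 }`. -/
def sContent {n : ℕ} (E Ω : Set (EuclideanSpace ℂ (Fin n))) (p : ℝ) : ℝ :=
  sSup { t : ℝ | ∃ f, MemAp Ω p f ∧ (∃ ζ ∈ Ω, f ζ ≠ 0) ∧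
    t = (∫ ζ in E, ‖f ζ‖ ^ p) / ∫ ζ in Ω, ‖f ζ‖ ^ p }

set_option maxHeartbeats 1000000 in
/-- Let `n ≥ 2` and let `Ω' ⊆ Ω` be bounded domains in `ℂⁿ` such that
`Ω ∖ Ω'` is a compact subset of `Ω`.  Then `s_p(Ω',Ω) = 1` for every `0 < p < ∞`. -/
theorem sContent_eq_one_of_compl_compact {n : ℕ} (hn : 2 ≤ n)
    (Ω' Ω : Set (EuclideanSpace ℂ (Fin n))) (hsub : Ω' ⊆ Ω)
    (hΩo : IsOpen Ω) (hΩc : IsConnected Ω) (hΩb : Bornology.IsBounded Ω)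
    (hΩ'o : IsOpen Ω') (hΩ'c : IsConnected Ω')
    (hcpt : IsCompact (Ω \ Ω'))
    (p : ℝ) (hp : 0 < p) :
    sContent Ω' Ω p = 1 := by
  classical
  haveI : BorelSpace (EuclideanSpace ℂ (Fin n)) :=
    inferInstance
  haveI : IsFiniteMeasureOnCompacts (volume : Measure (EuclideanSpace ℂ (Fin n))) :=
    Measure.IsFiniteMeasureOnCompacts.map (volume : Measure (Fin n → ℂ))
      (PiLp.homeomorph 2 (fun _ : Fin n => ℂ)).symm
  haveI : (volume : Measure (EuclideanSpace ℂ (Fin n))).IsOpenPosMeasure :=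
    (PiLp.continuous_toLp 2 (fun _ : Fin n => ℂ)).isOpenPosMeasure_map
      (fun x => ⟨WithLp.ofLp x, rfl⟩)
  haveI : Nonempty (Fin n) := ⟨⟨0, by omega⟩⟩
  haveI : Nontrivial (EuclideanSpace ℂ (Fin n)) :=
    inferInstance
  have hp0 : p ≠ 0 := hp.ne'
  obtain ⟨z₀, hz₀'⟩ := hΩ'c.nonempty
  have hz₀ : z₀ ∈ Ω := hsub hz₀'
  have hΩmeas : MeasurableSet Ω := hΩo.measurableSet
  have hΩ'meas : MeasurableSet Ω' := hΩ'o.measurableSet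
  have hKmeas : MeasurableSet (Ω \ Ω') := hΩmeas.diff hΩ'meas
  have hμΩ : volume Ω < ⊤ := hΩb.measure_lt_top
  have hμΩpos : 0 < volume Ω := hΩo.measure_pos volume hΩc.nonempty
  set S : Set ℝ := {t : ℝ | ∃ f, MemAp Ω p f ∧ (∃ ζ ∈ Ω, f ζ ≠ 0) ∧
    t = (∫ ζ in Ω', ‖f ζ‖ ^ p) / ∫ ζ in Ω, ‖f ζ‖ ^ p} with hSdef
  have hgoal : sContent Ω' Ω p = sSup S := by rw [hSdef]; rfl
  have habs_nonneg : ∀ (f : EuclideanSpace ℂ (Fin n) → ℂ) (ζ : EuclideanSpace ℂ (Fin n)),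
      0 ≤ ‖f ζ‖ ^ p := fun f ζ => Real.rpow_nonneg (norm_nonneg _) p
  -- integrability of |f|^p on Ω for f ∈ A^p(Ω)
  have hInt : ∀ f : EuclideanSpace ℂ (Fin n) → ℂ, MemAp Ω p f →
      IntegrableOn (fun ζ => ‖f ζ‖ ^ p) Ω := by
    rintro f ⟨hf, hfi⟩
    have hcont : ContinuousOn (fun ζ => ‖f ζ‖ ^ p) Ω :=
      (continuous_norm.comp_continuousOn hf.continuousOn).rpow_const
        (fun x _ => Or.inr hp.le)
    refine ⟨hcont.aestronglyMeasurable hΩmeas, ?_⟩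
    rw [hasFiniteIntegral_iff_ofReal (Filter.Eventually.of_forall fun ζ => habs_nonneg f ζ)]
    exact hfi
  -- upper bound: every element of S is ≤ 1
  have hub : ∀ t ∈ S, t ≤ 1 := by
    rintro t ⟨f, hf, -, rfl⟩
    have hint := hInt f hf
    have h0 : (0:ℝ) ≤ ∫ ζ in Ω, ‖f ζ‖ ^ p :=
      setIntegral_nonneg hΩmeas fun ζ _ => habs_nonneg f ζ
    have hmono : (∫ ζ in Ω', ‖f ζ‖ ^ p) ≤ ∫ ζ in Ω, ‖f ζ‖ ^ p :=
      setIntegral_mono_set hint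
        (Filter.Eventually.of_forall fun ζ => habs_nonneg f ζ) hsub.eventuallyLE
    exact div_le_one_of_le₀ hmono h0
  -- the constant function 1 gives a member of S
  have hmem1 : MemAp Ω p (fun _ => (1:ℂ)) := by
    refine ⟨differentiableOn_const 1, ?_⟩
    simp only [norm_one, Real.one_rpow, ENNReal.ofReal_one]
    rw [setLIntegral_one]
    exact hμΩ
  have h1S : ((volume Ω').toReal / (volume Ω).toReal) ∈ S := by
    refine ⟨fun _ => 1, hmem1, ⟨z₀, hz₀, one_ne_zero⟩, ?_⟩
    simp [Real.one_rpow, smul_eq_mul, measureReal_def]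
  have hne : S.Nonempty := ⟨_, h1S⟩
  have hbdd : BddAbove S := ⟨1, hub⟩
  rw [hgoal]
  refine le_antisymm (csSup_le hne hub) ?_
  rw [Real.le_sSup_iff hbdd hne]
  intro ε hε
  by_cases hK : Ω \ Ω' = ∅
  · -- then Ω' = Ω and the constant 1 gives the value 1
    have hΩΩ' : Ω' = Ω := le_antisymm hsub (Set.diff_eq_empty.1 hK)
    refine ⟨(volume Ω').toReal / (volume Ω).toReal, h1S, ?_⟩
    rw [hΩΩ', div_self (ENNReal.toReal_pos hμΩpos.ne' hμΩ.ne).ne']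
    linarith
  -- main case: K := Ω \ Ω' nonempty
  set K := Ω \ Ω' with hKdef
  have hKne : K.Nonempty := Set.nonempty_iff_ne_empty.2 hK
  -- choose a maximizing the norm on closure Ω
  have hclc : IsCompact (closure Ω) := hΩb.isCompact_closure
  obtain ⟨a, haΩ, hamax⟩ := hclc.exists_isMaxOn (hΩc.nonempty.mono subset_closure)
    continuous_norm.continuousOn
  -- every point of Ω has norm strictly less than ‖a‖
  have hlt : ∀ z ∈ Ω, ‖z‖ < ‖a‖ := by
    intro z hz
    obtain ⟨r, hr, hball⟩ := Metric.isOpen_iff.1 hΩo z hz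
    obtain ⟨v0, hv0⟩ := exists_ne (0 : EuclideanSpace ℂ (Fin n))
    set v := if z = 0 then v0 else z with hv
    have hvne : v ≠ 0 := by
      rw [hv]; split_ifs with h
      · exact hv0
      · exact h
    have hvn : (0:ℝ) < ‖v‖ := norm_pos_iff.2 hvne
    have hc : 0 < r / (2 * ‖v‖) := div_pos hr (by linarith)
    set w := z + (r / (2 * ‖v‖)) • v with hw
    have hsm : ‖(r / (2 * ‖v‖)) • v‖ = r / 2 := by
      rw [norm_smul, Real.norm_eq_abs, abs_of_pos hc]
      field_simp
    have hwΩ : w ∈ Ω := by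
      refine hball ?_
      rw [Metric.mem_ball, dist_eq_norm]
      have h1 : w - z = (r / (2 * ‖v‖)) • v := by rw [hw]; abel
      rw [h1, hsm]; linarith
    have hwa : ‖w‖ ≤ ‖a‖ := hamax (subset_closure hwΩ)
    by_cases h0 : z = 0
    · have hwn : ‖w‖ = r / 2 := by rw [hw, h0, zero_add, hsm]
      rw [h0, norm_zero]; linarith
    · have hzn : (0:ℝ) < ‖z‖ := norm_pos_iff.2 h0
      have hveq : v = z := by rw [hv, if_neg h0]
      have hc2 : 0 < r / (2 * ‖z‖) := div_pos hr (by linarith)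
      have hwn : ‖w‖ = ‖z‖ + r / 2 := by
        rw [hw, hveq]
        have h2 : z + (r / (2 * ‖z‖)) • z = (1 + r / (2 * ‖z‖)) • z := by
          rw [add_smul, one_smul]
        rw [h2, norm_smul, Real.norm_eq_abs, abs_of_pos (by linarith)]
        field_simp
      linarith
  -- the linear functional φ z = Re ⟪a, z⟫
  set φ : EuclideanSpace ℂ (Fin n) → ℝ := fun z => (inner ℂ a z : ℂ).re with hφdef
  have hφc : Continuous φ := Complex.continuous_re.comp (continuous_const.inner continuous_id)
  have hφa : φ a = ‖a‖ ^ 2 := inner_self_eq_norm_sq (𝕜 := ℂ) a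
  -- strict maximality of φ at a among closure points ≠ a
  have hφlt : ∀ z ∈ closure Ω, z ≠ a → φ z < φ a := by
    intro z hz hne'
    have h1 : ‖z‖ ≤ ‖a‖ := hamax hz
    have h2 : ‖a - z‖ ^ 2 = ‖a‖ ^ 2 - 2 * φ z + ‖z‖ ^ 2 := norm_sub_sq (𝕜 := ℂ) a z
    have h3 : (0:ℝ) < ‖a - z‖ ^ 2 := by
      have h4 : a - z ≠ 0 := sub_ne_zero.2 (Ne.symm hne')
      have h5 : (0:ℝ) < ‖a - z‖ := norm_pos_iff.2 h4
      positivity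
    rw [hφa]
    nlinarith [norm_nonneg a, norm_nonneg z]
  -- the max of φ on K
  obtain ⟨z₁, hz₁K, hz₁max⟩ := hcpt.exists_isMaxOn hKne hφc.continuousOn
  set c := φ z₁ with hcdef
  have hz₁Ω : z₁ ∈ Ω := hz₁K.1
  have hca : c < φ a := by
    refine hφlt z₁ (subset_closure hz₁Ω) fun h => ?_
    have h5 := hlt z₁ hz₁Ω
    rw [h] at h5
    exact lt_irrefl _ h5
  set c' := (c + φ a) / 2 with hc'def
  have hcc' : c < c' := by rw [hc'def]; linarith
  have hc'a : c' < φ a := by rw [hc'def]; linarith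
  -- the open set U near a where φ > c'
  set U := Ω ∩ φ ⁻¹' Set.Ioi c' with hUdef
  have hUopen : IsOpen U := hΩo.inter (isOpen_Ioi.preimage hφc)
  have hUne : U.Nonempty := by
    obtain ⟨w, hw1, hw2⟩ := _root_.mem_closure_iff.1 haΩ (φ ⁻¹' Set.Ioi c')
      (isOpen_Ioi.preimage hφc) (by simpa using hc'a)
    exact ⟨w, hw2, hw1⟩
  have hμUlt : volume U < ⊤ := (measure_mono Set.inter_subset_left).trans_lt hμΩ
  have hμU : 0 < (volume U).toReal :=
    ENNReal.toReal_pos (hUopen.measure_pos volume hUne).ne' hμUlt.ne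
  have hμK : volume K < ⊤ := hcpt.measure_lt_top
  -- choose τ > 0 with exp(τ(c-c')) * (λK/λU) < -ε =: δ
  set δ := -ε with hδdef
  have hδpos : 0 < δ := by rw [hδdef]; linarith
  have htend : Tendsto (fun τ : ℝ => Real.exp (τ * (c - c')) *
      ((volume K).toReal / (volume U).toReal)) atTop (nhds 0) := by
    have h1 : Tendsto (fun τ : ℝ => τ * (c - c')) atTop atBot :=
      tendsto_id.atTop_mul_const_of_neg (by linarith)
    simpa using (Real.tendsto_exp_atBot.comp h1).mul_const
      ((volume K).toReal / (volume U).toReal)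
  obtain ⟨τ, hτ1, hτpos⟩ :=
    ((htend.eventually_lt_const hδpos).and (eventually_gt_atTop (0:ℝ))).exists
  -- the witness function
  set f : EuclideanSpace ℂ (Fin n) → ℂ :=
    fun z => Complex.exp (((τ / p : ℝ) : ℂ) * inner ℂ a z) with hfdef
  set h : EuclideanSpace ℂ (Fin n) → ℝ := fun z => Real.exp (τ * φ z) with hhdef
  have hgh : ∀ z, ‖f z‖ ^ p = h z := by
    intro z
    rw [hfdef, hhdef]
    simp only
    rw [Complex.norm_exp]
    have hre : (((τ / p : ℝ) : ℂ) * inner ℂ a z).re = (τ / p) * φ z := by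
      rw [hφdef]
      simp [Complex.mul_re]
    rw [hre, ← Real.exp_mul]
    congr 1
    field_simp
  have hhc : Continuous h := Real.continuous_exp.comp (continuous_const.mul hφc)
  -- boundedness of h on Ω
  have hφle : ∀ z ∈ Ω, φ z ≤ ‖a‖ ^ 2 := by
    intro z hz
    have h1 : φ z ≤ ‖(inner ℂ a z : ℂ)‖ := Complex.re_le_norm _
    have h2 : ‖(inner ℂ a z : ℂ)‖ ≤ ‖a‖ * ‖z‖ := by
      exact norm_inner_le_norm a z
    have h3 := (hlt z hz).le
    nlinarith [norm_nonneg a]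
  have hIntΩ : IntegrableOn h Ω := by
    refine Measure.integrableOn_of_bounded hμΩ.ne hhc.aestronglyMeasurable
      (M := Real.exp (τ * ‖a‖ ^ 2)) ?_
    rw [ae_restrict_iff' hΩmeas]
    refine Filter.Eventually.of_forall fun z hz => ?_
    rw [hhdef]
    simp only [Real.norm_eq_abs, abs_of_pos (Real.exp_pos _)]
    refine Real.exp_le_exp.2 ?_
    have h6 := hφle z hz
    nlinarith
  have hIntΩ' : IntegrableOn h Ω' := hIntΩ.mono_set hsub
  have hIntK : IntegrableOn h K := hIntΩ.mono_set Set.diff_subset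
  have hIntU : IntegrableOn h U := hIntΩ.mono_set Set.inter_subset_left
  -- splitting the integral
  have hsplit : (∫ z in Ω, h z) = (∫ z in Ω', h z) + ∫ z in K, h z := by
    rw [← setIntegral_union Set.disjoint_sdiff_right hKmeas hIntΩ' hIntK,
      Set.union_diff_cancel hsub]
  -- lower bound on the denominator
  have hDU : Real.exp (τ * c') * (volume U).toReal ≤ ∫ z in U, h z := by
    rw [show Real.exp (τ * c') * (volume U).toReal = volume.real U • Real.exp (τ * c') by
      rw [smul_eq_mul, measureReal_def, mul_comm]]
    refine setIntegral_ge_of_const_le hUopen.measurableSet hμUlt.ne (fun x hx => ?_) hIntU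
    refine Real.exp_le_exp.2 ?_
    have h7 : c' < φ x := hx.2
    nlinarith
  have hUΩ : (∫ z in U, h z) ≤ ∫ z in Ω, h z :=
    setIntegral_mono_set hIntΩ
      (Filter.Eventually.of_forall fun z => (Real.exp_pos _).le)
      (Set.inter_subset_left).eventuallyLE
  have hD0 : 0 < ∫ z in Ω, h z := by
    have h1 : 0 < Real.exp (τ * c') * (volume U).toReal := by positivity
    linarith
  -- upper bound on the numerator over K
  have hNle : (∫ z in K, h z) ≤ Real.exp (τ * c) * (volume K).toReal := by
    have hb : ∀ x ∈ K, ‖h x‖ ≤ Real.exp (τ * c) := by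
      intro x hx
      rw [hhdef]
      simp only [Real.norm_eq_abs, abs_of_pos (Real.exp_pos _)]
      refine Real.exp_le_exp.2 ?_
      have h8 : φ x ≤ c := hz₁max hx
      nlinarith
    have h9 := norm_setIntegral_le_of_norm_le_const hμK hb
    calc (∫ z in K, h z) ≤ ‖∫ z in K, h z‖ := le_abs_self _
      _ ≤ Real.exp (τ * c) * (volume K).toReal := h9
  -- key inequality: exp(τc) λK < δ exp(τc') λU
  have hKey : Real.exp (τ * c) * (volume K).toReal <
      δ * (Real.exp (τ * c') * (volume U).toReal) := by
    have h1 : Real.exp (τ * (c - c')) * (volume K).toReal < δ * (volume U).toReal := by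
      have h10 := hτ1
      rw [mul_div_assoc'] at h10
      have h2 := (div_lt_iff₀ hμU).1 h10
      linarith
    have hexp : Real.exp (τ * c) = Real.exp (τ * (c - c')) * Real.exp (τ * c') := by
      rw [← Real.exp_add]; ring_nf
    rw [hexp]
    have hec' : 0 < Real.exp (τ * c') := Real.exp_pos _
    nlinarith [ENNReal.toReal_nonneg (a := volume K)]
  have hNδD : (∫ z in K, h z) < δ * ∫ z in Ω, h z := by
    have h2 : δ * (Real.exp (τ * c') * (volume U).toReal) ≤ δ * ∫ z in Ω, h z :=
      mul_le_mul_of_nonneg_left (hDU.trans hUΩ) hδpos.le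
    linarith
  -- the value of the ratio
  refine ⟨(∫ z in Ω', h z) / ∫ z in Ω, h z, ?_, ?_⟩
  · refine ⟨f, ⟨?_, ?_⟩, ⟨z₀, hz₀, by rw [hfdef]; exact Complex.exp_ne_zero _⟩, ?_⟩
    · have hdiffi : Differentiable ℂ fun z : EuclideanSpace ℂ (Fin n) => (inner ℂ a z : ℂ) := by
        have h11 : (fun z : EuclideanSpace ℂ (Fin n) => (inner ℂ a z : ℂ)) = ⇑(innerSL ℂ a) := by
          funext z; rw [innerSL_apply_apply]
        rw [h11]
        exact (innerSL ℂ a).differentiable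
      exact (((differentiable_const _).mul hdiffi).cexp).differentiableOn
    · have heq : (∫⁻ ζ in Ω, ENNReal.ofReal (‖f ζ‖ ^ p)) =
          ∫⁻ ζ in Ω, (‖h ζ‖₊ : ENNReal) := by
        refine lintegral_congr fun ζ => ?_
        rw [hgh ζ, ← enorm_eq_nnnorm, Real.enorm_eq_ofReal (Real.exp_pos _).le]
      rw [heq]
      exact hIntΩ.2
    · simp only [hgh]
  · -- 1 + ε < ratio
    rw [lt_div_iff₀ hD0]
    have hΩ'eq : (∫ z in Ω', h z) = (∫ z in Ω, h z) - ∫ z in K, h z := by linarith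
    rw [hΩ'eq]
    have h12 : ε = -δ := by rw [hδdef]; ring
    rw [h12]
    nlinarith
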